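/- Let R be a commutative ring. If the annihilating-ideal graph AG(R) contains an infinite clique (an infinite family of pairwise distinct nonzero ideals with pairwise product zero), then the zero-divisor graph Γ(R) contains an infinite clique (an infinite set of pairwise distinct nonzero elements with pairwise product zero). -/

import Mathlib

/-!
Only finitely many ideals are contained in a given finite set, so one can choose greedily
infinitely many distinct ideals of the clique together with pairwise distinct elements of them.
The product of two such elements lies in the product of two distinct ideals of the clique, which
is zero.
-/

open Function

theorem SetLike.finite_setOf_coe_subset {α A : Type*} [SetLike A α] {F : Set α}
    (hF : F.Finite) : {I : A | (I : Set α) ⊆ F}.Finite :=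
  hF.finite_subsets.preimage SetLike.coe_injective.injOn

theorem Set.Infinite.exists_mem_notMem_exists_mem_notMem {α A : Type*} [SetLike A α]
    {S : Set A} (hS : S.Infinite) {P : Set A} (hP : P.Finite) {F : Set α} (hF : F.Finite) :
    ∃ I ∈ S, I ∉ P ∧ ∃ x ∈ I, x ∉ F := by
  obtain ⟨I, hIS, hI⟩ := (hS.sdiff (hP.union (SetLike.finite_setOf_coe_subset hF))).nonempty
  simp only [Set.mem_union, Set.mem_ofPred_eq, not_or, Set.not_subset] at hI
  exact ⟨I, hIS, hI.1, hI.2⟩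

theorem Set.Infinite.exists_seq_injective_mem {α A : Type*} [SetLike A α] {S : Set A}
    (hS : S.Infinite) :
    ∃ (I : ℕ → A) (x : ℕ → α), Injective I ∧ Injective x ∧ ∀ n, I n ∈ S ∧ x n ∈ I n := by
  classical
  obtain ⟨f, hmem, hne⟩ := exists_seq_of_forall_finset_exists
    (fun p : A × α ↦ p.1 ∈ S ∧ p.2 ∈ p.1) (fun p q ↦ p.1 ≠ q.1 ∧ p.2 ≠ q.2) fun s _ ↦ by
      obtain ⟨I, hIS, hIs, x, hxI, hxs⟩ := hS.exists_mem_notMem_exists_mem_notMem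
        (s.image Prod.fst).finite_toSet (s.image Prod.snd).finite_toSet
      refine ⟨(I, x), ⟨hIS, hxI⟩, fun p hp ↦ ⟨?_, ?_⟩⟩
      · rintro rfl; exact hIs (Finset.mem_image_of_mem _ hp)
      · rintro rfl; exact hxs (Finset.mem_image_of_mem _ hp)
  have hdistinct : Pairwise fun m n ↦ (f m).1 ≠ (f n).1 ∧ (f m).2 ≠ (f n).2 := by
    intro m n hmn
    rcases hmn.lt_or_gt with h | h
    · exact hne m n h
    · exact ⟨(hne n m h).1.symm, (hne n m h).2.symm⟩
  exact ⟨fun n ↦ (f n).1, fun n ↦ (f n).2,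
    injective_iff_pairwise_ne.2 fun m n h ↦ (hdistinct h).1,
    injective_iff_pairwise_ne.2 fun m n h ↦ (hdistinct h).2, hmem⟩

theorem Gamma_infinite_clique_of_AG_infinite_clique {R : Type*} [CommRing R]
    (h : ∃ S : Set (Ideal R), S.Infinite ∧ (∀ I ∈ S, I ≠ ⊥) ∧
      ∀ I ∈ S, ∀ J ∈ S, I ≠ J → I * J = ⊥) :
    ∃ T : Set R, T.Infinite ∧ (∀ x ∈ T, x ≠ 0) ∧
      ∀ x ∈ T, ∀ y ∈ T, x ≠ y → x * y = 0 := by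
  obtain ⟨S, hS, -, hmul⟩ := h
  obtain ⟨I, x, hI, hx, hmem⟩ := hS.exists_seq_injective_mem
  refine ⟨Set.range x \ {0}, (Set.infinite_range_of_injective hx).sdiff (Set.finite_singleton 0),
    fun y hy ↦ hy.2, ?_⟩
  rintro _ ⟨⟨m, rfl⟩, -⟩ _ ⟨⟨n, rfl⟩, -⟩ hxy
  have hIJ : I m * I n = ⊥ := hmul _ (hmem m).1 _ (hmem n).1 (hI.ne (ne_of_apply_ne x hxy))
  simpa [hIJ] using Ideal.mul_mem_mul (hmem m).2 (hmem n).2
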